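/- Let K be a field, δ : K → K a derivation, and suppose P ∈ K[X] satisfies P(b) = 0 and P'(b) ≠ 0 for some b ∈ K. Then for every i ≥ 1, the element δⁱ(b) lies in the subfield of K generated by b together with all elements δʲ(c) where c ranges over the coefficients of P and j ≤ i. In particular, each δⁱ(b) can be written as Q_i/(P'(b))^{ℓ_i} for some ℓ_i ∈ ℕ and Q_i a polynomial expression in b and the δʲ(c). -/

import Mathlib

/-!
Differentiating `P(b) = 0` gives `P^δ(b) + P'(b) δb = 0`, where `P^δ` is `P` with `δ` applied to
its coefficients; hence `δb = -P^δ(b) / P'(b)`. By the Leibniz and quotient rules, a derivation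
maps the subfield generated by a set `S` into any subfield containing both `S` and `δ S`, so the
subfields `Fᵢ` of the statement satisfy `δ Fᵢ ⊆ Fᵢ₊₁`, and induction on `i` finishes.
-/

open Polynomial

theorem Polynomial.eval_mem {R S : Type*} [Semiring R] [SetLike S R] [SubsemiringClass S R]
    {s : S} {P : R[X]} {b : R} (hcoeff : ∀ n, P.coeff n ∈ s) (hb : b ∈ s) : P.eval b ∈ s := by
  rw [eval_eq_sum_range]
  exact sum_mem fun n _ => mul_mem (hcoeff n) (pow_mem hb n)

namespace Derivation

def ofAddLeibniz {A : Type*} [CommRing A] (δ : A → A) (hadd : ∀ x y, δ (x + y) = δ x + δ y)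
    (hmul : ∀ x y, δ (x * y) = δ x * y + x * δ y) : Derivation ℤ A A :=
  Derivation.mk' (AddMonoidHom.mk' δ hadd).toIntLinearMap fun x y => by
    simp only [AddMonoidHom.coe_toIntLinearMap, AddMonoidHom.mk'_apply, smul_eq_mul, hmul]
    ring

variable {R K : Type*} [CommRing R] [Field K] [Algebra R K] (D : Derivation R K K)

theorem mapsTo_subfieldClosure {S : Set K} {L : Subfield K} (hS : S ⊆ L)
    (hD : Set.MapsTo D S L) : Set.MapsTo D (Subfield.closure S) L := by
  have hSL : Subfield.closure S ≤ L := Subfield.closure_le.2 hS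
  intro x hx
  induction hx using Subfield.closure_induction with
  | mem x hx => exact hD hx
  | one => simp
  | add x y _ _ hx hy => simpa using add_mem hx hy
  | neg x _ hx => simpa using neg_mem hx
  | inv x hxS hx =>
    rw [leibniz_inv, smul_eq_mul]
    exact mul_mem (neg_mem (pow_mem (inv_mem (hSL hxS)) 2)) hx
  | mul x y hxS hyS hx hy =>
    rw [leibniz, smul_eq_mul, smul_eq_mul]
    exact add_mem (mul_mem (hSL hxS) hy) (mul_mem (hSL hyS) hx)

theorem map_mem_of_eval_eq_zero {L : Subfield K} {P : K[X]} {b : K} (hb : P.eval b = 0)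
    (hb' : P.derivative.eval b ≠ 0) (hbL : b ∈ L) (hcoeff : ∀ n, P.coeff n ∈ L)
    (hDcoeff : ∀ n, D (P.coeff n) ∈ L) : D b ∈ L := by
  have hroot := D.apply_eval_eq b P
  rw [hb, map_zero, smul_eq_mul] at hroot
  have hDb : D b = -PolynomialModule.eval b (D.mapCoeffs P) / P.derivative.eval b := by
    rw [eq_div_iff hb']
    linear_combination -hroot
  have hmapCoeffs : PolynomialModule.eval b (D.mapCoeffs P) ∈ L := by
    rw [PolynomialModule.eval_apply]
    exact sum_mem fun n _ => mul_mem (pow_mem hbL n) (hDcoeff n)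
  rw [hDb]
  refine div_mem (neg_mem hmapCoeffs) (eval_mem (fun n => ?_) hbL)
  rw [coeff_derivative]
  exact mul_mem (hcoeff _) (add_mem (natCast_mem L n) (one_mem L))

end Derivation

/-- If `b` is a simple root of `P`, then all the higher derivatives `δⁱ b` lie in the
subfield generated by `b` and the elements `δʲ c`, `j ≤ i`, `c` a coefficient of `P`. -/
theorem iterate_deriv_root_mem_subfield {K : Type*} [Field K] (δ : K → K)
    (hadd : ∀ x y, δ (x + y) = δ x + δ y)
    (hmul : ∀ x y, δ (x * y) = δ x * y + x * δ y)
    (P : Polynomial K) (b : K) (hb : P.eval b = 0) (hb' : P.derivative.eval b ≠ 0) :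
    ∀ i : ℕ, 1 ≤ i →
      δ^[i] b ∈ Subfield.closure
        ({b} ∪ {x : K | ∃ j ≤ i, ∃ k : ℕ, x = δ^[j] (P.coeff k)}) := by
  let D := Derivation.ofAddLeibniz δ hadd hmul
  set F : ℕ → Subfield K := fun i =>
    Subfield.closure ({b} ∪ {x : K | ∃ j ≤ i, ∃ k : ℕ, x = δ^[j] (P.coeff k)})
  have hF_mono : Monotone F := fun i i' h => Subfield.closure_mono <| by
    rintro x (rfl | ⟨j, hj, k, rfl⟩)
    exacts [Or.inl rfl, Or.inr ⟨j, hj.trans h, k, rfl⟩]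
  have hb_mem (i : ℕ) : b ∈ F i := Subfield.subset_closure (Or.inl rfl)
  have hcoeff_mem {i j : ℕ} (k : ℕ) (hj : j ≤ i) : δ^[j] (P.coeff k) ∈ F i :=
    Subfield.subset_closure (Or.inr ⟨j, hj, k, rfl⟩)
  have hδb : δ b ∈ F 1 :=
    D.map_mem_of_eval_eq_zero hb hb' (hb_mem 1) (fun k => hcoeff_mem k zero_le_one)
      (fun k => hcoeff_mem k le_rfl)
  have hstep (i : ℕ) : Set.MapsTo δ (F i) (F (i + 1)) := by
    refine D.mapsTo_subfieldClosure ((Subfield.subset_closure).trans (hF_mono i.le_succ)) ?_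
    rintro x (rfl | ⟨j, hj, k, rfl⟩)
    · exact hF_mono (by omega) hδb
    · change δ (δ^[j] (P.coeff k)) ∈ F (i + 1)
      rw [← Function.iterate_succ_apply' δ j]
      exact hcoeff_mem k (Nat.succ_le_succ hj)
  intro i hi
  induction i, hi using Nat.le_induction with
  | base => rw [Function.iterate_one]; exact hδb
  | succ n _ ih => rw [Function.iterate_succ_apply']; exact hstep n ih
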